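/- Let k be a field, R = k[[x]] the formal power series ring, I = (x²)R, M = (x)R/(x⁴)R, and N = (x)R/(x²)R. Then 𝓛_I(N) = 1, 𝓛_I(M) = 2, and 𝓛_I(M ⊕ N) = 2. In particular, I-quasilength is not additive on direct sums: 𝓛_I(M ⊕ N) ≠ 𝓛_I(M) + 𝓛_I(N). -/

import Mathlib

open scoped BigOperators ENNReal

universe u v

/-- A filtration of `M` of length `h` whose factors are cyclic modules killed by `J`. -/
def HasQLFiltration (S : Type u) [CommRing S] (J : Ideal S)
    (M : Type v) [AddCommGroup M] [Module S M] (h : ℕ) : Prop :=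
  ∃ c : Fin (h + 1) → Submodule S M,
    Monotone c ∧ c 0 = ⊥ ∧ c (Fin.last h) = ⊤ ∧
    ∀ i : Fin h,
      (∃ m : M, c i.succ = c i.castSucc ⊔ Submodule.span S {m}) ∧
      ∀ a ∈ J, ∀ x ∈ c i.succ, a • x ∈ c i.castSucc

/-- The `J`-quasilength of `M`. -/
noncomputable def quasilength (S : Type u) [CommRing S] (J : Ideal S)
    (M : Type v) [AddCommGroup M] [Module S M] : ℕ∞ :=
  sInf {n : ℕ∞ | ∃ h : ℕ, n = (h : ℕ∞) ∧ HasQLFiltration S J M h}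

variable (k : Type u) [Field k]

/-- The ideal `(x) ⊆ k[[x]]`. -/
noncomputable abbrev psIdealX : Ideal (PowerSeries k) := Ideal.span {PowerSeries.X}

/-- The module `(x)/(x⁴)` over `k[[x]]`. -/
abbrev psModM :=
  ↥(psIdealX k) ⧸
    Submodule.comap (psIdealX k).subtype
      (Ideal.span {PowerSeries.X ^ 4} : Ideal (PowerSeries k))

/-- The module `(x)/(x²)` over `k[[x]]`. -/
abbrev psModN :=
  ↥(psIdealX k) ⧸
    Submodule.comap (psIdealX k).subtype
      (Ideal.span {PowerSeries.X ^ 2} : Ideal (PowerSeries k))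

/-!
The upper bounds are explicit filtrations. `N` is cyclic and killed by `x²`. `M` has the
filtration `0 ⊂ (x²)/(x⁴) ⊂ M`. In `M ⊕ N` the cyclic submodule generated by `(x², x)` is killed
by `x²` and contains `x² • (M ⊕ N)`, because `x² • (x, 0) = x • (x², x)` as `x` kills `N`.
For the lower bounds, a filtration of length at most one forces `J` to kill the module, while
`x² • x ≠ 0` in `M`.
-/

section Quasilength

variable {S : Type u} [CommRing S] {J : Ideal S} {M : Type v} [AddCommGroup M] [Module S M]

theorem quasilength_le {h : ℕ} (hM : HasQLFiltration S J M h) : quasilength S J M ≤ h :=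
  sInf_le ⟨h, rfl, hM⟩

theorem le_quasilength {n : ℕ} (hn : ∀ h, HasQLFiltration S J M h → n ≤ h) :
    (n : ℕ∞) ≤ quasilength S J M := by
  refine le_sInf ?_
  rintro _ ⟨h, rfl, hM⟩
  exact_mod_cast hn h hM

theorem HasQLFiltration.subsingleton (hM : HasQLFiltration S J M 0) : Subsingleton M := by
  obtain ⟨c, -, hbot, htop, -⟩ := hM
  rw [← Submodule.subsingleton_iff S, ← subsingleton_iff_bot_eq_top, ← hbot, ← htop]
  rfl

theorem HasQLFiltration.smul_eq_zero (hM : HasQLFiltration S J M 1) {a : S} (ha : a ∈ J)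
    (x : M) : a • x = 0 := by
  obtain ⟨c, -, hbot, htop, hfactor⟩ := hM
  have hx : x ∈ c (0 : Fin 1).succ := by
    rw [show (0 : Fin 1).succ = Fin.last 1 from rfl, htop]
    trivial
  simpa [show (0 : Fin 1).castSucc = 0 from rfl, hbot] using (hfactor 0).2 a ha x hx

theorem one_le_quasilength {x : M} (hx : x ≠ 0) : 1 ≤ quasilength S J M := by
  refine le_quasilength fun h hM => Nat.one_le_iff_ne_zero.2 ?_
  rintro rfl
  exact hx (hM.subsingleton.elim x 0)

theorem two_le_quasilength {a : S} (ha : a ∈ J) {x : M} (hx : a • x ≠ 0) :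
    2 ≤ quasilength S J M := by
  refine le_quasilength fun h hM => ?_
  by_contra! hh
  interval_cases h
  · exact hx (hM.subsingleton.elim _ 0)
  · exact hx (hM.smul_eq_zero ha x)

theorem forall_mem_span_singleton_smul_mem {s : S} {m : M} {P : Submodule S M}
    (hs : s • m ∈ P) : ∀ a ∈ Ideal.span {s}, a • m ∈ P := by
  intro a ha
  obtain ⟨b, rfl⟩ := Ideal.mem_span_singleton'.1 ha
  rw [mul_smul]
  exact P.smul_mem b hs

theorem forall_mem_span_singleton_smul_eq_zero {s : S} {m : M} (hs : s • m = 0) :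
    ∀ a ∈ Ideal.span {s}, a • m = 0 := by
  simpa using forall_mem_span_singleton_smul_mem (P := ⊥) (by simpa using hs)

theorem smul_eq_zero_of_mem_span_singleton {a : S} {m : M} (ha : ∀ b ∈ J, b • m = 0)
    (hJ : a ∈ J) {x : M} (hx : x ∈ Submodule.span S {m}) : a • x = 0 := by
  obtain ⟨r, rfl⟩ := Submodule.mem_span_singleton.1 hx
  rw [smul_comm, ha a hJ, smul_zero]

theorem hasQLFiltration_one {m : M} (hspan : Submodule.span S {m} = ⊤)
    (hm : ∀ a ∈ J, a • m = 0) : HasQLFiltration S J M 1 := by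
  refine ⟨![⊥, ⊤], Fin.monotone_iff_le_succ.2 fun i => by simp, rfl, rfl, fun i => ?_⟩
  fin_cases i
  refine ⟨⟨m, by simp [hspan]⟩, fun a ha x _ => ?_⟩
  simpa using smul_eq_zero_of_mem_span_singleton hm ha (hspan ▸ Submodule.mem_top : x ∈ _)

theorem hasQLFiltration_two {m₁ m₂ : M} (hspan : Submodule.span S {m₁, m₂} = ⊤)
    (hm₁ : ∀ a ∈ J, a • m₁ = 0) (hm₂ : ∀ a ∈ J, a • m₂ ∈ Submodule.span S {m₁}) :
    HasQLFiltration S J M 2 := by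
  refine ⟨![⊥, Submodule.span S {m₁}, ⊤], Fin.monotone_iff_le_succ.2 fun i => ?_, rfl, rfl,
    Fin.forall_fin_two.2 ⟨?_, ?_⟩⟩
  · fin_cases i <;> simp
  · refine ⟨⟨m₁, by simp⟩, fun a ha x hx => ?_⟩
    simpa using smul_eq_zero_of_mem_span_singleton hm₁ ha (by simpa using hx)
  · refine ⟨⟨m₂, by simp [← hspan, Submodule.span_insert]⟩, fun a ha x _ => ?_⟩
    obtain ⟨r, s, rfl⟩ := Submodule.mem_span_pair.1 (hspan ▸ Submodule.mem_top : x ∈ _)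
    simp only [Matrix.cons_val_zero, Fin.castSucc_one, Matrix.cons_val_one]
    rw [smul_add, smul_comm a r, smul_comm a s, hm₁ a ha, smul_zero, zero_add]
    exact Submodule.smul_mem _ s (hm₂ a ha)

end Quasilength

namespace PowerSeries

/-- `psModN k` and `psModM k` are `XQuot k 2` and `XQuot k 4`. -/
abbrev XQuot (e : ℕ) :=
  ↥(psIdealX k) ⧸ Submodule.comap (psIdealX k).subtype (Ideal.span {(X : k⟦X⟧) ^ e})

variable {k}

noncomputable def XQuot.gen (e : ℕ) : XQuot k e :=
  Submodule.Quotient.mk ⟨X, Ideal.mem_span_singleton_self X⟩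

namespace XQuot

variable {e : ℕ}

theorem smul_gen_eq_zero_iff {f : k⟦X⟧} :
    f • gen (k := k) e = 0 ↔ (X : k⟦X⟧) ^ e ∣ f * X := by
  rw [gen, ← Submodule.Quotient.mk_smul, Submodule.Quotient.mk_eq_zero, Submodule.mem_comap,
    Ideal.mem_span_singleton]
  rfl

theorem X_pow_smul_gen_eq_zero_iff {j : ℕ} :
    (X : k⟦X⟧) ^ j • gen (k := k) e = 0 ↔ e ≤ j + 1 := by
  rw [smul_gen_eq_zero_iff, ← pow_succ, pow_dvd_pow_iff X_prime.ne_zero X_prime.not_isUnit]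

theorem gen_ne_zero (he : 2 ≤ e) : gen (k := k) e ≠ 0 := by
  simpa using (X_pow_smul_gen_eq_zero_iff (k := k) (e := e) (j := 0)).not.2 (by omega)

theorem exists_smul_gen_eq (y : XQuot k e) : ∃ f : k⟦X⟧, f • gen e = y := by
  obtain ⟨⟨_, hm⟩, rfl⟩ := Submodule.Quotient.mk_surjective _ y
  obtain ⟨f, rfl⟩ := Ideal.mem_span_singleton'.1 hm
  exact ⟨f, rfl⟩

theorem span_gen : Submodule.span k⟦X⟧ {gen (k := k) e} = ⊤ :=
  eq_top_iff.2 fun y _ => Submodule.mem_span_singleton.2 (exists_smul_gen_eq y)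

end XQuot

end PowerSeries

open PowerSeries PowerSeries.XQuot

theorem quasilength_psModN : quasilength k⟦X⟧ (Ideal.span {X ^ 2}) (psModN k) = 1 := by
  refine le_antisymm (quasilength_le (hasQLFiltration_one span_gen ?_))
    (one_le_quasilength (gen_ne_zero le_rfl))
  exact forall_mem_span_singleton_smul_eq_zero (X_pow_smul_gen_eq_zero_iff.2 (by norm_num))

theorem quasilength_psModM : quasilength k⟦X⟧ (Ideal.span {X ^ 2}) (psModM k) = 2 := by
  refine le_antisymm
    (quasilength_le (hasQLFiltration_two (m₁ := (X : k⟦X⟧) • gen 4) (m₂ := gen 4) ?_ ?_ ?_))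
    (two_le_quasilength (Ideal.mem_span_singleton_self _)
      (X_pow_smul_gen_eq_zero_iff.not.2 (by norm_num)))
  · exact eq_top_iff.2 (span_gen (k := k) ▸ Submodule.span_mono (by simp))
  · refine forall_mem_span_singleton_smul_eq_zero ?_
    rw [smul_smul, ← pow_succ, X_pow_smul_gen_eq_zero_iff]
  · refine forall_mem_span_singleton_smul_mem (Submodule.mem_span_singleton.2 ⟨X, ?_⟩)
    rw [smul_smul, ← sq]

theorem quasilength_psModM_prod_psModN :
    quasilength k⟦X⟧ (Ideal.span {X ^ 2}) (psModM k × psModN k) = 2 := by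
  have hXN : (X : k⟦X⟧) • gen (k := k) 2 = 0 := by
    simpa using X_pow_smul_gen_eq_zero_iff (k := k) (e := 2) (j := 1)
  refine le_antisymm (quasilength_le (hasQLFiltration_two
      (m₁ := ((X : k⟦X⟧) • gen 4, gen 2)) (m₂ := (gen 4, 0)) ?_ ?_ ?_))
    (two_le_quasilength (x := (gen 4, 0)) (Ideal.mem_span_singleton_self _) ?_)
  · refine eq_top_iff.2 fun ⟨y, z⟩ _ => ?_
    obtain ⟨f, rfl⟩ := exists_smul_gen_eq y
    obtain ⟨g, rfl⟩ := exists_smul_gen_eq z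
    refine Submodule.mem_span_pair.2 ⟨g, f - g * X, Prod.ext ?_ ?_⟩
    · simp only [Prod.fst_add, Prod.smul_fst, smul_smul, ← add_smul]
      congr 1
      ring
    · simp
  · refine forall_mem_span_singleton_smul_eq_zero (Prod.ext ?_ ?_)
    · simp [smul_smul, ← pow_succ, X_pow_smul_gen_eq_zero_iff]
    · simpa using X_pow_smul_gen_eq_zero_iff (k := k) (e := 2) (j := 2)
  · refine forall_mem_span_singleton_smul_mem (Submodule.mem_span_singleton.2 ⟨X, ?_⟩)
    simp [smul_smul, ← sq, hXN]
  · simpa using X_pow_smul_gen_eq_zero_iff (k := k) (e := 4) (j := 2)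

/-- With `R = k[[x]]`, `I = (x²)`, `M = (x)/(x⁴)` and `N = (x)/(x²)`,
one has `𝓛_I(N) = 1`, `𝓛_I(M) = 2`, and `𝓛_I(M ⊕ N) = 2`; in particular
`I`-quasilength is not additive on direct sums. -/
theorem quasilength_not_additive :
    quasilength (PowerSeries k) (Ideal.span {PowerSeries.X ^ 2}) (psModN k) = 1 ∧
    quasilength (PowerSeries k) (Ideal.span {PowerSeries.X ^ 2}) (psModM k) = 2 ∧
    quasilength (PowerSeries k) (Ideal.span {PowerSeries.X ^ 2}) (psModM k × psModN k) = 2 ∧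
    quasilength (PowerSeries k) (Ideal.span {PowerSeries.X ^ 2}) (psModM k × psModN k) ≠
      quasilength (PowerSeries k) (Ideal.span {PowerSeries.X ^ 2}) (psModM k) +
      quasilength (PowerSeries k) (Ideal.span {PowerSeries.X ^ 2}) (psModN k) := by
  rw [quasilength_psModN, quasilength_psModM, quasilength_psModM_prod_psModN]
  decide
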